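/- Let G=(V,E) be a finite connected simple graph and let c ∈ C(G) be a center vertex with R(G) ≥ 1. Then R(G/c) = R(G) − 1. -/

import Mathlib

open SimpleGraph

noncomputable def eccentr {V : Type} (G : SimpleGraph V) (x : V) : ℕ :=
  sSup (Set.range (G.dist x))

noncomputable def grRadius {V : Type} (G : SimpleGraph V) : ℕ :=
  sInf (Set.range (eccentr G))

def ncontract {V : Type} (G : SimpleGraph V) (x : V) :
    SimpleGraph {v : V // ¬ G.Adj x v} where
  Adj a b := G.Adj a.1 b.1 ∨
    (a.1 = x ∧ b.1 ≠ x ∧ ∃ y, G.Adj x y ∧ G.Adj y b.1) ∨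
    (b.1 = x ∧ a.1 ≠ x ∧ ∃ y, G.Adj x y ∧ G.Adj y a.1)
  symm := ⟨fun a b h => by
    rcases h with h | h | h
    · exact Or.inl h.symm
    · exact Or.inr (Or.inr h)
    · exact Or.inr (Or.inl h)⟩
  loopless := ⟨fun a h => by
    rcases h with h | ⟨h1, h2, -⟩ | ⟨h1, h2, -⟩
    · exact G.loopless.irrefl _ h
    · exact h2 h1
    · exact h2 h1⟩

/-! In `G/c` every vertex `x ≠ c` is exactly one step closer to `c` than in `G`, so `c` has
eccentricity `R(G) - 1` there. Conversely, let `a ≠ c` have eccentricity `e` in `G/c` and let `a'`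
be its neighbour on a shortest path of `G` towards `c`. A shortest walk of `G/c` from `a` to `b`
either avoids `c`, and is then a walk of `G`, so `d(a', b) ≤ e + 1`; or it passes through `c`,
and then `d(a', b) ≤ d(a', c) + d(c, b) ≤ e + 1` as well. Hence `R(G) ≤ e + 1`. -/

section

variable {W : Type} {H : SimpleGraph W}

lemma eccentr_le {x : W} {n : ℕ} (h : ∀ y, H.dist x y ≤ n) : eccentr H x ≤ n :=
  csSup_le (Set.range_nonempty_iff_nonempty.mpr ⟨x⟩) (Set.forall_mem_range.mpr h)

lemma dist_le_eccentr [Finite W] (x y : W) : H.dist x y ≤ eccentr H x :=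
  le_csSup (Set.finite_range _).bddAbove ⟨y, rfl⟩

lemma exists_dist_eq_eccentr [Finite W] (x : W) : ∃ y, H.dist x y = eccentr H x :=
  Nat.sSup_mem (Set.range_nonempty_iff_nonempty.mpr ⟨x⟩) (Set.finite_range _).bddAbove

lemma grRadius_le_eccentr (x : W) : grRadius H ≤ eccentr H x :=
  Nat.sInf_le ⟨x, rfl⟩

lemma le_grRadius [Nonempty W] {n : ℕ} (h : ∀ x, n ≤ eccentr H x) : n ≤ grRadius H :=
  le_csInf (Set.range_nonempty _) (Set.forall_mem_range.mpr h)

lemma SimpleGraph.Connected.exists_adj_dist_add_one_eq (hconn : H.Connected) {u v : W}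
    (hne : u ≠ v) : ∃ w, H.Adj w v ∧ H.dist u w + 1 = H.dist u v := by
  obtain ⟨p, hp⟩ := hconn.exists_walk_length_eq_dist v u
  obtain ⟨w, hvw, q, rfl⟩ := Walk.exists_eq_cons_of_ne hne.symm p
  refine ⟨w, hvw.symm, le_antisymm ?_ ?_⟩
  · have h1 : H.dist u w ≤ q.length := dist_comm (G := H) ▸ dist_le q
    have h2 : H.dist u v = q.length + 1 := by rw [dist_comm, ← hp, Walk.length_cons]
    omega
  · calc H.dist u v ≤ H.dist u w + H.dist w v := hconn.dist_triangle
      _ = H.dist u w + 1 := by rw [dist_eq_one_iff_adj.mpr hvw.symm]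

end

namespace ncontract

variable {V : Type} {G : SimpleGraph V} {c : V}

/-- The vertex of `G/c` into which the closed neighbourhood of `c` is contracted. -/
def root (G : SimpleGraph V) (c : V) : {v : V // ¬ G.Adj c v} := ⟨c, G.irrefl⟩

lemma val_ne_of_ne_root {x : {v : V // ¬ G.Adj c v}} (hx : x ≠ root G c) : x.1 ≠ c :=
  fun h => hx (Subtype.ext h)

lemma adj_of_ne_root {a b : {v : V // ¬ G.Adj c v}} (h : (ncontract G c).Adj a b)
    (ha : a ≠ root G c) (hb : b ≠ root G c) : G.Adj a.1 b.1 := by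
  rcases h with h | ⟨h, -⟩ | ⟨h, -⟩
  · exact h
  · exact absurd h (val_ne_of_ne_root ha)
  · exact absurd h (val_ne_of_ne_root hb)

lemma adj_of_adj {a b : {v : V // ¬ G.Adj c v}} (h : G.Adj a.1 b.1) : (ncontract G c).Adj a b :=
  Or.inl h

lemma root_adj_of_adj_adj {x : {v : V // ¬ G.Adj c v}} {y : V} (hcy : G.Adj c y)
    (hyx : G.Adj y x.1) (hx : x ≠ root G c) : (ncontract G c).Adj (root G c) x :=
  Or.inr (Or.inl ⟨rfl, val_ne_of_ne_root hx, y, hcy, hyx⟩)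

lemma dist_le_two_of_root_adj {x : {v : V // ¬ G.Adj c v}}
    (h : (ncontract G c).Adj (root G c) x) : G.dist c x.1 ≤ 2 := by
  rcases h with h | ⟨-, -, y, hcy, hyx⟩ | ⟨-, h, -⟩
  · exact absurd h x.2
  · exact dist_le (hcy.toWalk.concat hyx)
  · exact absurd rfl h

lemma exists_walk_of_root_not_mem_support {a b : {v : V // ¬ G.Adj c v}} :
    ∀ w : (ncontract G c).Walk a b, root G c ∉ w.support →
      ∃ p : G.Walk a.1 b.1, p.length = w.length
  | .nil, _ => ⟨.nil, rfl⟩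
  | .cons h q, hw => by
    simp only [Walk.support_cons, List.mem_cons, not_or] at hw
    obtain ⟨p, hp⟩ := exists_walk_of_root_not_mem_support q hw.2
    have hu : _ ≠ root G c := fun hu => hw.2 (hu ▸ q.start_mem_support)
    exact ⟨.cons (adj_of_ne_root h (Ne.symm hw.1) hu) p, by simp [hp]⟩

lemma dist_le_length_of_root_not_mem_support {a b : {v : V // ¬ G.Adj c v}}
    (w : (ncontract G c).Walk a b) (hw : root G c ∉ w.support) :
    G.dist a.1 b.1 ≤ w.length := by
  obtain ⟨p, hp⟩ := exists_walk_of_root_not_mem_support w hw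
  exact hp ▸ dist_le p

lemma exists_walk_root_length_add_one_le (hconn : G.Connected)
    (x : {v : V // ¬ G.Adj c v}) (hx : x ≠ root G c) :
    ∃ w : (ncontract G c).Walk (root G c) x, w.length + 1 ≤ G.dist c x.1 := by
  induction hn : G.dist c x.1 using Nat.strong_induction_on generalizing x with
  | _ n ih =>
  obtain ⟨u, hux, hu⟩ := hconn.exists_adj_dist_add_one_eq (val_ne_of_ne_root hx).symm
  have huc : u ≠ c := by
    rintro rfl
    exact x.2 hux
  by_cases hcu : G.Adj c u
  · refine ⟨(root_adj_of_adj_adj hcu hux hx).toWalk, ?_⟩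
    have := hconn.pos_dist_of_ne huc.symm
    simp only [Walk.length_cons, Walk.length_nil]
    omega
  · lift u to {v : V // ¬ G.Adj c v} using hcu
    obtain ⟨w, hw⟩ := ih _ (by omega) u (fun h => huc (congrArg Subtype.val h)) rfl
    exact ⟨w.concat (adj_of_adj hux), by simp only [Walk.length_concat]; omega⟩

lemma connected (hconn : G.Connected) : (ncontract G c).Connected := by
  have hroot (x : {v : V // ¬ G.Adj c v}) : (ncontract G c).Reachable (root G c) x := by
    by_cases hx : x = root G c
    · exact hx ▸ Reachable.refl _
    · obtain ⟨w, -⟩ := exists_walk_root_length_add_one_le hconn x hx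
      exact ⟨w⟩
  have : Nonempty {v : V // ¬ G.Adj c v} := ⟨root G c⟩
  exact ⟨fun x y => (hroot x).symm.trans (hroot y)⟩

lemma dist_root_add_one_le (hconn : G.Connected) {x : {v : V // ¬ G.Adj c v}}
    (hx : x ≠ root G c) : (ncontract G c).dist (root G c) x + 1 ≤ G.dist c x.1 := by
  obtain ⟨w, hw⟩ := exists_walk_root_length_add_one_le hconn x hx
  have := dist_le w
  omega

lemma dist_le_dist_root_add_one (hconn : G.Connected) (x : {v : V // ¬ G.Adj c v}) :
    G.dist c x.1 ≤ (ncontract G c).dist (root G c) x + 1 := by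
  obtain ⟨w, hpath, hw⟩ := (connected hconn).exists_path_of_dist (root G c) x
  cases w with
  | nil => simp [root]
  | @cons _ u _ h q =>
    have hq : root G c ∉ q.support := ((Walk.cons_isPath_iff h q).mp hpath).2
    have h1 := dist_le_two_of_root_adj h
    have h2 := dist_le_length_of_root_not_mem_support q hq
    have h3 : G.dist c x.1 ≤ G.dist c u.1 + G.dist u.1 x.1 := hconn.dist_triangle
    rw [← hw, Walk.length_cons]
    omega

lemma dist_eq_dist_root_add_one (hconn : G.Connected) {x : {v : V // ¬ G.Adj c v}}
    (hx : x ≠ root G c) : G.dist c x.1 = (ncontract G c).dist (root G c) x + 1 :=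
  le_antisymm (dist_le_dist_root_add_one hconn x) (dist_root_add_one_le hconn hx)

lemma dist_le_or_dist_root_add_le (hconn : G.Connected) (a b : {v : V // ¬ G.Adj c v}) :
    G.dist a.1 b.1 ≤ (ncontract G c).dist a b ∨
      (ncontract G c).dist a (root G c) + (ncontract G c).dist (root G c) b ≤
        (ncontract G c).dist a b := by
  classical
  obtain ⟨w, hw⟩ := (connected hconn).exists_walk_length_eq_dist a b
  by_cases hroot : root G c ∈ w.support
  · right
    have hlen := congrArg Walk.length (w.take_spec hroot)
    rw [Walk.length_append] at hlen
    have := dist_le (w.takeUntil _ hroot)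
    have := dist_le (w.dropUntil _ hroot)
    omega
  · exact .inl (hw ▸ dist_le_length_of_root_not_mem_support w hroot)

variable [Finite V]

lemma eccentr_root (hconn : G.Connected) :
    eccentr (ncontract G c) (root G c) = eccentr G c - 1 := by
  apply le_antisymm
  · refine eccentr_le fun x => ?_
    by_cases hx : x = root G c
    · simp [hx]
    · have := dist_eq_dist_root_add_one hconn hx
      have := dist_le_eccentr (H := G) c x.1
      omega
  · obtain ⟨f, hf⟩ := exists_dist_eq_eccentr (H := G) c
    by_cases hcf : G.Adj c f
    · rw [← hf, dist_eq_one_iff_adj.mpr hcf]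
      exact Nat.zero_le _
    lift f to {v : V // ¬ G.Adj c v} using hcf
    by_cases hfr : f = root G c
    · rw [hfr] at hf
      simp only [root, dist_self] at hf
      omega
    have := dist_eq_dist_root_add_one hconn hfr
    have := dist_le_eccentr (H := ncontract G c) (root G c) f
    omega

lemma grRadius_le_eccentr_add_one (hconn : G.Connected) (a : {v : V // ¬ G.Adj c v}) :
    grRadius G ≤ eccentr (ncontract G c) a + 1 := by
  by_cases ha : a = root G c
  · rw [ha, eccentr_root hconn]
    have := grRadius_le_eccentr (H := G) c
    omega
  set e := eccentr (ncontract G c) a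
  have hae (b) : (ncontract G c).dist a b ≤ e := dist_le_eccentr a b
  obtain ⟨a', ha'a, ha'⟩ := hconn.exists_adj_dist_add_one_eq (val_ne_of_ne_root ha).symm
  have hra : (ncontract G c).dist (root G c) a ≤ e := dist_comm (G := ncontract G c) ▸ hae _
  have hca' : G.dist a' c = (ncontract G c).dist (root G c) a := by
    have := dist_eq_dist_root_add_one hconn ha
    rw [dist_comm]
    omega
  refine (grRadius_le_eccentr a').trans (eccentr_le fun b => ?_)
  have hvia_c : G.dist a' b ≤ G.dist a' c + G.dist c b := hconn.dist_triangle
  by_cases hcb : G.Adj c b ∨ c = b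
  · have : G.dist c b ≤ 1 := by
      rcases hcb with hcb | rfl
      · exact (dist_eq_one_iff_adj.mpr hcb).le
      · simp
    omega
  push Not at hcb
  lift b to {v : V // ¬ G.Adj c v} using hcb.1
  have hb := hae b
  rcases dist_le_or_dist_root_add_le hconn a b with hab | hab
  · have : G.dist a' b ≤ G.dist a' a.1 + G.dist a.1 b := hconn.dist_triangle
    rw [dist_eq_one_iff_adj.mpr ha'a] at this
    omega
  · have := dist_le_dist_root_add_one hconn b
    rw [dist_comm (G := ncontract G c) (u := a)] at hab
    omega

end ncontract

theorem stmt_9 {V : Type} [Fintype V] (G : SimpleGraph V) (hconn : G.Connected)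
    (c : V) (hc : eccentr G c = grRadius G) :
    grRadius (ncontract G c) = grRadius G - 1 := by
  have : Nonempty {v : V // ¬ G.Adj c v} := ⟨ncontract.root G c⟩
  apply le_antisymm
  · calc grRadius (ncontract G c) ≤ eccentr (ncontract G c) (ncontract.root G c) :=
          grRadius_le_eccentr _
      _ = grRadius G - 1 := by rw [ncontract.eccentr_root hconn, hc]
  · exact le_grRadius fun a =>
      Nat.sub_le_of_le_add (ncontract.grRadius_le_eccentr_add_one hconn a)
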